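/- arXiv:1901.02149 — 3 statements merged into one kernel-verified Lean document; each statement's English description precedes it below -/
import Mathlib

section
/- Existence of greatest common co-divisors up to w: let k ≥ 1, u : Fin k → S and w ∈ S with w ∈ S·(u i) for every i. Then there exists z ∈ S such that: (a) w ∈ S·z; (b) u i ∈ S·z for every i; and (c) whenever v ∈ S satisfies u i ∈ S·v for every i, one has z ∈ S·v. -/
/-!
Write `w = r i * u i` with `r i ∈ S`. Axiom II gives least common multiples (in the order of `SDvd`), so
the `r i` have a least common multiple `g`, and since `w` is a common multiple, `w = g * z`. This `z`
is the greatest common co-divisor: a common co-divisor `v` of the `u i` makes `w * v⁻¹` a common multiple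
of the `r i`, hence a multiple of `g`, and cancelling `g` from `w = g * z` exhibits `z` as a co-multiple
of `v`.
-/

open scoped BigOperators

/-- `u` divides `w` in `S`: `w ∈ u·S`. -/
def SDvd {G : Type*} [Group G] (S : Submonoid G) (u w : G) : Prop := ∃ s ∈ S, w = u * s

/-- The left set `u·S = {u * s : s ∈ S}`. -/
def leftSet {G : Type*} [Group G] (S : Submonoid G) (u : G) : Set G := {w | ∃ s ∈ S, w = u * s}

/-- `τ(u)`: the number of ordered factorizations `u = v * w` with `v, w ∈ S`. -/
noncomputable def tau {G : Type*} [Group G] (S : Submonoid G) (u : G) : ℕ :=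
  Set.ncard {p : G × G | p.1 ∈ S ∧ p.2 ∈ S ∧ p.1 * p.2 = u}

/-- An integral monoid: a submonoid of a group satisfying Axioms I, II, III. -/
structure IntegralMonoid {G : Type*} [Group G] (S : Submonoid G) : Prop where
  ax1 : ∀ u ∈ S, u⁻¹ ∈ S → u = 1
  ax2 : ∀ u : G, ∃ x ∈ S, ∃ y ∈ S, u = x * y⁻¹ ∧
        ∀ z ∈ S, ∀ w ∈ S, u = z * w⁻¹ → ∃ c ∈ S, z = x * c ∧ w = y * c
  ax3 : ∀ u ∈ S, {p : G × G | p.1 ∈ S ∧ p.2 ∈ S ∧ p.1 * p.2 = u}.Finite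

section

variable {G : Type*} [Group G] {S : Submonoid G}

def IsLeastCommonMultiple (S : Submonoid G) {ι : Type*} (r : ι → G) (g : G) : Prop :=
  g ∈ S ∧ (∀ i, SDvd S (r i) g) ∧ ∀ h ∈ S, (∀ i, SDvd S (r i) h) → SDvd S g h

namespace IntegralMonoid

/-- The canonical representation `a⁻¹ * b = x * y⁻¹` of Axiom II produces the least common multiple
`a * x = b * y`. -/
lemma exists_lcm_pair (hS : IntegralMonoid S) {a : G} (ha : a ∈ S) (b : G) :
    ∃ g ∈ S, SDvd S a g ∧ SDvd S b g ∧ ∀ h, SDvd S a h → SDvd S b h → SDvd S g h := by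
  obtain ⟨x, hx, y, hy, hxy, hmin⟩ := hS.ax2 (a⁻¹ * b)
  have hax : a * x = b * y := by
    rw [← mul_inv_cancel_left a b, hxy, mul_assoc, inv_mul_cancel_right]
  refine ⟨a * x, S.mul_mem ha hx, ⟨x, hx, rfl⟩, ⟨y, hy, hax⟩, ?_⟩
  rintro h ⟨p, hp, rfl⟩ ⟨q, hq, hpq⟩
  have hpq_inv : a⁻¹ * b = p * q⁻¹ := by
    rw [inv_mul_eq_iff_eq_mul, ← mul_assoc, hpq, mul_inv_cancel_right]
  obtain ⟨c, hc, rfl, -⟩ := hmin p hp q hq hpq_inv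
  exact ⟨c, hc, (mul_assoc _ _ _).symm⟩

lemma exists_lcm (hS : IntegralMonoid S) :
    ∀ {k : ℕ} (r : Fin k → G), (∀ i, r i ∈ S) → ∃ g, IsLeastCommonMultiple S r g
  | 0, _, _ => ⟨1, S.one_mem, fun i => i.elim0, fun h hh _ => ⟨h, hh, (one_mul h).symm⟩⟩
  | _ + 1, r, hr => by
    obtain ⟨g, hg, hgr, hgmin⟩ := hS.exists_lcm (fun i => r i.castSucc) (fun i => hr _)
    obtain ⟨g', hg', ⟨p, hp, rfl⟩, hlast, hmin⟩ := hS.exists_lcm_pair hg (r (Fin.last _))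
    refine ⟨g * p, hg', fun i => ?_, fun h hh hrh => hmin h (hgmin h hh fun i => hrh _) (hrh _)⟩
    induction i using Fin.lastCases with
    | last => exact hlast
    | cast j =>
      obtain ⟨q, hq, hgq⟩ := hgr j
      exact ⟨q * p, S.mul_mem hq hp, by rw [hgq, mul_assoc]⟩

end IntegralMonoid

end

theorem gcd_codvd_exists {G : Type*} [Group G] (S : Submonoid G) (hS : IntegralMonoid S)
    (k : ℕ) (hk : 1 ≤ k) (u : Fin k → G) (hu : ∀ i, u i ∈ S)
    (w : G) (hw : w ∈ S) (hwu : ∀ i, ∃ s ∈ S, w = s * u i) :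
    ∃ z ∈ S, (∃ s ∈ S, w = s * z) ∧ (∀ i, ∃ s ∈ S, u i = s * z) ∧
      ∀ v ∈ S, (∀ i, ∃ s ∈ S, u i = s * v) → ∃ s ∈ S, z = s * v := by
  choose r hrS hrw using hwu
  obtain ⟨g, hg, hgr, hgmin⟩ := hS.exists_lcm r hrS
  obtain ⟨z, hz, hwz⟩ := hgmin w hw fun i => ⟨u i, hu i, hrw i⟩
  refine ⟨z, hz, ⟨g, hg, hwz⟩, fun i => ?_, fun v _ hvu => ?_⟩
  · obtain ⟨p, hp, hgp⟩ := hgr i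
    exact ⟨p, hp, mul_left_cancel (by rw [← mul_assoc, ← hgp, ← hwz, hrw i])⟩
  · choose s hs hus using hvu
    have hrs : ∀ i, r i * s i = w * v⁻¹ := fun i => by
      rw [hrw i, hus i, mul_assoc, mul_inv_cancel_right]
    have hmem : w * v⁻¹ ∈ S := hrs ⟨0, hk⟩ ▸ S.mul_mem (hrS _) (hs _)
    obtain ⟨d, hd, hgd⟩ := hgmin _ hmem fun i => ⟨s i, hs i, (hrs i).symm⟩
    refine ⟨d, hd, mul_left_cancel (a := g) ?_⟩
    rw [← hwz, ← mul_assoc, ← hgd, inv_mul_cancel_right]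
end

section
/- Well-definedness of the index: if u ∈ S can be written both as an ordered product u = q 0 * q 1 * ⋯ * q (k−1) and as u = r 0 * r 1 * ⋯ * r (m−1), where k, m ≥ 0 (an empty product equals 1) and every q i and every r j is an irreducible element of S, then k = m. -/
open scoped BigOperators

/-- Axiom IV′ (homogeneity), in the equivalent form proved in the paper. -/
def Homogeneous {G : Type*} [Group G] (S : Submonoid G) : Prop :=
  ∀ w u v : G, w ∈ S → u ∈ S → v ∈ S →
    (∀ d ∈ S, SDvd S d w → SDvd S d u → d = 1) →
    (∀ d ∈ S, SDvd S d w → SDvd S d v → d = 1) →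
    leftSet S w ∩ leftSet S u = leftSet S w ∩ leftSet S v → u = v

/-!
Induct on `τ(u)`, which grows strictly when `u` is multiplied by a non-identity element.
Two factorizations starting with the same irreducible are compared after cancelling it.
If they start with distinct irreducibles `p ≠ q`, take the least common left multiple
`p·S ∩ q·S = p x·S = q y·S` given by Axiom II. Then `y` is irreducible: for a proper divisor
`d ≠ 1` of `y`, the element `q d` has no common divisor with `p` other than `1` and
`p·S ∩ q·S = p·S ∩ q d·S`, so homogeneity forces `q = q d`. Symmetrically `x` is irreducible,
both tails are of the form `x c` and `y c`, and the induction hypothesis applies to each,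
with the same factorization of `c`.
-/

section

variable {G : Type*} [Group G] {S : Submonoid G}

def LeftCoprime (S : Submonoid G) (a b : G) : Prop :=
  ∀ d ∈ S, SDvd S d a → SDvd S d b → d = 1

def SIrreducible (S : Submonoid G) (p : G) : Prop :=
  p ∈ S ∧ p ≠ 1 ∧ ∀ d ∈ S, SDvd S d p → d = 1 ∨ d = p

def leftDivisors (S : Submonoid G) (u : G) : Set G := {d | d ∈ S ∧ SDvd S d u}

theorem mem_leftSet_self (u : G) : u ∈ leftSet S u := ⟨1, S.one_mem, (mul_one u).symm⟩

theorem leftSet_mul_subset (a : G) {b : G} (hb : b ∈ S) : leftSet S (a * b) ⊆ leftSet S a := by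
  rintro _ ⟨s, hs, rfl⟩
  exact ⟨b * s, S.mul_mem hb hs, mul_assoc a b s⟩

theorem one_mem_leftDivisors {u : G} (hu : u ∈ S) : (1 : G) ∈ leftDivisors S u :=
  ⟨S.one_mem, u, hu, (one_mul u).symm⟩

theorem self_mem_leftDivisors {u : G} (hu : u ∈ S) : u ∈ leftDivisors S u :=
  ⟨hu, mem_leftSet_self u⟩

theorem leftDivisors_eq_image_fst (u : G) :
    leftDivisors S u = Prod.fst '' {p : G × G | p.1 ∈ S ∧ p.2 ∈ S ∧ p.1 * p.2 = u} := by
  ext d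
  constructor
  · rintro ⟨hd, s, hs, rfl⟩
    exact ⟨(d, s), ⟨hd, hs, rfl⟩, rfl⟩
  · rintro ⟨⟨d, s⟩, ⟨hd, hs, rfl⟩, rfl⟩
    exact ⟨hd, s, hs, rfl⟩

theorem tau_eq_ncard_leftDivisors (u : G) : tau S u = (leftDivisors S u).ncard := by
  rw [leftDivisors_eq_image_fst, Set.InjOn.ncard_image]
  · rfl
  rintro ⟨a, b⟩ ⟨-, -, hab⟩ ⟨c, d⟩ ⟨-, -, hcd⟩ (rfl : a = c)
  exact congrArg (Prod.mk a) (mul_left_cancel (hab.trans hcd.symm : a * b = a * d))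

theorem SIrreducible.leftCoprime {p b : G} (hp : SIrreducible S p) (hpb : ¬ SDvd S p b) :
    LeftCoprime S p b := by
  intro d hd hdp hdb
  rcases hp.2.2 d hd hdp with rfl | rfl
  exacts [rfl, absurd hdb hpb]

theorem SIrreducible.eq_of_sdvd {p q : G} (hp : SIrreducible S p) (hq : SIrreducible S q)
    (h : SDvd S p q) : p = q :=
  (hq.2.2 p hp.1 h).resolve_left hp.2.1

theorem list_prod_mem_of_sIrreducible {l : List G} (hl : ∀ x ∈ l, SIrreducible S x) :
    l.prod ∈ S :=
  S.list_prod_mem fun x hx => (hl x hx).1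

namespace IntegralMonoid

theorem eq_one_of_mul_eq_one (hS : IntegralMonoid S) {a b : G} (ha : a ∈ S) (hb : b ∈ S)
    (h : a * b = 1) : a = 1 :=
  hS.ax1 a ha (inv_eq_of_mul_eq_one_right h ▸ hb)

theorem finite_leftDivisors (hS : IntegralMonoid S) {u : G} (hu : u ∈ S) :
    (leftDivisors S u).Finite :=
  leftDivisors_eq_image_fst u ▸ (hS.ax3 u hu).image Prod.fst

theorem leftDivisors_one (hS : IntegralMonoid S) : leftDivisors S 1 = {1} := by
  refine Set.eq_singleton_iff_unique_mem.2 ⟨one_mem_leftDivisors S.one_mem, ?_⟩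
  rintro d ⟨hd, s, hs, hds⟩
  exact hS.eq_one_of_mul_eq_one hd hs hds.symm

theorem tau_eq_two_iff (hS : IntegralMonoid S) {p : G} (hp : p ∈ S) :
    tau S p = 2 ↔ p ≠ 1 ∧ ∀ d ∈ S, SDvd S d p → d = 1 ∨ d = p := by
  rw [tau_eq_ncard_leftDivisors]
  have hpair : {1, p} ⊆ leftDivisors S p :=
    Set.insert_subset (one_mem_leftDivisors hp)
      (Set.singleton_subset_iff.2 (self_mem_leftDivisors hp))
  constructor
  · intro h
    have hp1 : p ≠ 1 := by
      rintro rfl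
      rw [hS.leftDivisors_one, Set.ncard_singleton] at h
      exact absurd h (by decide)
    have heq : {1, p} = leftDivisors S p :=
      Set.eq_of_subset_of_ncard_le hpair (by rw [h, Set.ncard_pair hp1.symm])
        (hS.finite_leftDivisors hp)
    refine ⟨hp1, fun d hd hdp => ?_⟩
    have hmem : d ∈ ({1, p} : Set G) := heq ▸ ⟨hd, hdp⟩
    exact hmem
  · rintro ⟨hp1, hdiv⟩
    rw [← hpair.antisymm fun d ⟨hd, hdp⟩ => hdiv d hd hdp, Set.ncard_pair hp1.symm]

theorem sIrreducible_iff (hS : IntegralMonoid S) {p : G} :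
    SIrreducible S p ↔ p ∈ S ∧ tau S p = 2 :=
  ⟨fun hp => ⟨hp.1, (hS.tau_eq_two_iff hp.1).2 hp.2⟩,
    fun ⟨hp, hτ⟩ => ⟨hp, (hS.tau_eq_two_iff hp).1 hτ⟩⟩

theorem tau_lt_tau_mul_left (hS : IntegralMonoid S) {a b : G} (ha : a ∈ S) (hb : b ∈ S)
    (ha1 : a ≠ 1) : tau S b < tau S (a * b) := by
  rw [tau_eq_ncard_leftDivisors, tau_eq_ncard_leftDivisors,
    ← Set.ncard_image_of_injective _ (mul_right_injective a)]
  refine Set.ncard_lt_ncard ⟨?_, fun hsub => ?_⟩ (hS.finite_leftDivisors (S.mul_mem ha hb))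
  · rintro _ ⟨d, ⟨hd, s, hs, rfl⟩, rfl⟩
    exact ⟨S.mul_mem ha hd, s, hs, (mul_assoc a d s).symm⟩
  · obtain ⟨d, ⟨hd, -⟩, had⟩ := hsub (one_mem_leftDivisors (S.mul_mem ha hb))
    exact ha1 (hS.eq_one_of_mul_eq_one ha hd had)

theorem tau_lt_tau_mul_right (hS : IntegralMonoid S) {a b : G} (ha : a ∈ S) (hb : b ∈ S)
    (hb1 : b ≠ 1) : tau S a < tau S (a * b) := by
  rw [tau_eq_ncard_leftDivisors, tau_eq_ncard_leftDivisors]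
  refine Set.ncard_lt_ncard ⟨?_, fun hsub => ?_⟩ (hS.finite_leftDivisors (S.mul_mem ha hb))
  · rintro d ⟨hd, s, hs, rfl⟩
    exact ⟨hd, s * b, S.mul_mem hs hb, mul_assoc d s b⟩
  · obtain ⟨-, s, hs, habs⟩ := hsub (self_mem_leftDivisors (S.mul_mem ha hb))
    rw [mul_assoc, left_eq_mul] at habs
    exact hb1 (hS.eq_one_of_mul_eq_one hb hs habs)

theorem exists_list_prod_eq (hS : IntegralMonoid S) {u : G} (hu : u ∈ S) :
    ∃ l : List G, (∀ x ∈ l, SIrreducible S x) ∧ l.prod = u := by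
  induction hn : tau S u using Nat.strong_induction_on generalizing u with
  | _ n ih =>
  by_cases hu1 : u = 1
  · exact ⟨[], by simp, hu1.symm⟩
  by_cases hirr : ∀ d ∈ S, SDvd S d u → d = 1 ∨ d = u
  · exact ⟨[u], by simpa using ⟨hu, hu1, hirr⟩, List.prod_singleton⟩
  push Not at hirr
  obtain ⟨d, hd, ⟨e, he, rfl⟩, hd1, hde⟩ := hirr
  have he1 : e ≠ 1 := by
    rintro rfl
    exact hde (mul_one d).symm
  obtain ⟨ld, hld, rfl⟩ := ih _ (hn ▸ hS.tau_lt_tau_mul_right hd he he1) hd rfl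
  obtain ⟨le, hle, rfl⟩ := ih _ (hn ▸ hS.tau_lt_tau_mul_left hd he hd1) he rfl
  exact ⟨ld ++ le, fun x hx => (List.mem_append.1 hx).elim (hld x) (hle x), List.prod_append⟩

theorem eq_nil_of_prod_eq_one (hS : IntegralMonoid S) {l : List G}
    (hl : ∀ x ∈ l, SIrreducible S x) (h : l.prod = 1) : l = [] := by
  rcases l with _ | ⟨p, t⟩
  · rfl
  rw [List.forall_mem_cons] at hl
  rw [List.prod_cons] at h
  exact absurd (hS.eq_one_of_mul_eq_one hl.1.1 (list_prod_mem_of_sIrreducible hl.2) h) hl.1.2.1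

theorem exists_leftSet_inter_eq (hS : IntegralMonoid S) (a b : G) :
    ∃ x ∈ S, ∃ y ∈ S, a * x = b * y ∧ leftSet S a ∩ leftSet S b = leftSet S (b * y) := by
  obtain ⟨x, hx, y, hy, hxy, hmin⟩ := hS.ax2 (a⁻¹ * b)
  have hlcm : a * x = b * y := by
    rw [← mul_inv_eq_iff_eq_mul, mul_assoc, ← hxy, mul_inv_cancel_left]
  refine ⟨x, hx, y, hy, hlcm, subset_antisymm ?_ fun m hm => ⟨?_, leftSet_mul_subset b hy hm⟩⟩
  · rintro _ ⟨⟨v, hv, rfl⟩, w, hw, hvw⟩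
    obtain ⟨c, hc, rfl, rfl⟩ := hmin v hv w hw (by rw [eq_mul_inv_iff_mul_eq, mul_assoc, ← hvw,
      inv_mul_cancel_left])
    exact ⟨c, hc, by rw [← mul_assoc, hlcm, mul_assoc]⟩
  · exact leftSet_mul_subset a hx (hlcm ▸ hm)

theorem sIrreducible_of_leftSet_inter_eq (hS : IntegralMonoid S) (hhom : Homogeneous S)
    {p q y : G} (hp : SIrreducible S p) (hq : SIrreducible S q) (hpq : p ≠ q) (hy : y ∈ S)
    (hlcm : leftSet S p ∩ leftSet S q = leftSet S (q * y)) : SIrreducible S y := by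
  have hqy : q * y ∈ leftSet S p := (hlcm.symm ▸ mem_leftSet_self (q * y)).1
  refine ⟨hy, ?_, fun d hd ⟨s, hs, hyds⟩ => ?_⟩
  · rintro rfl
    exact hpq (hp.eq_of_sdvd hq (mul_one q ▸ hqy))
  by_cases hs1 : s = 1
  · exact Or.inr (by rw [hyds, hs1, mul_one])
  left
  subst hyds
  have hpqd : ¬ SDvd S p (q * d) := by
    intro hpqd
    obtain ⟨c, hc, hqdc⟩ : q * d ∈ leftSet S (q * (d * s)) :=
      hlcm ▸ ⟨hpqd, leftSet_mul_subset q hd (mem_leftSet_self (q * d))⟩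
    rw [← mul_assoc, mul_assoc, left_eq_mul] at hqdc
    exact hs1 (hS.eq_one_of_mul_eq_one hs hc hqdc)
  have hsets : leftSet S p ∩ leftSet S q = leftSet S p ∩ leftSet S (q * d) := by
    refine subset_antisymm (fun m hm => ⟨hm.1, ?_⟩)
      (Set.inter_subset_inter_right _ (leftSet_mul_subset q hd))
    rw [hlcm, ← mul_assoc] at hm
    exact leftSet_mul_subset (q * d) hs hm
  have hqd := hhom p q (q * d) hp.1 hq.1 (S.mul_mem hq.1 hd)
    (hp.leftCoprime fun h => hpq (hp.eq_of_sdvd hq h)) (hp.leftCoprime hpqd) hsets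
  exact left_eq_mul.1 hqd

theorem exists_sIrreducible_cofactors (hS : IntegralMonoid S) (hhom : Homogeneous S)
    {p q v w : G} (hp : SIrreducible S p) (hq : SIrreducible S q) (hpq : p ≠ q)
    (hv : v ∈ S) (hw : w ∈ S) (h : p * v = q * w) :
    ∃ x y c, SIrreducible S x ∧ SIrreducible S y ∧ c ∈ S ∧ v = x * c ∧ w = y * c := by
  obtain ⟨x, hx, y, hy, hxy, hlcm⟩ := hS.exists_leftSet_inter_eq p q
  have hlcm' : leftSet S q ∩ leftSet S p = leftSet S (p * x) := by
    rw [Set.inter_comm, hlcm, hxy]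
  obtain ⟨c, hc, hwc⟩ : q * w ∈ leftSet S (q * y) := hlcm ▸ ⟨⟨v, hv, h.symm⟩, w, hw, rfl⟩
  rw [mul_assoc] at hwc
  refine ⟨x, y, c, hS.sIrreducible_of_leftSet_inter_eq hhom hq hp hpq.symm hx hlcm',
    hS.sIrreducible_of_leftSet_inter_eq hhom hp hq hpq hy hlcm, hc, ?_, mul_left_cancel hwc⟩
  exact mul_left_cancel (by rw [h, hwc, ← mul_assoc, ← hxy, mul_assoc])

theorem length_eq_of_prod_eq (hS : IntegralMonoid S) (hhom : Homogeneous S) {l₁ l₂ : List G}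
    (h₁ : ∀ x ∈ l₁, SIrreducible S x) (h₂ : ∀ x ∈ l₂, SIrreducible S x)
    (h : l₁.prod = l₂.prod) : l₁.length = l₂.length := by
  induction hn : tau S l₁.prod using Nat.strong_induction_on generalizing l₁ l₂ with
  | _ n ih =>
  rcases l₁ with _ | ⟨p, t₁⟩
  · rw [hS.eq_nil_of_prod_eq_one h₂ h.symm]
  rcases l₂ with _ | ⟨r, t₂⟩
  · exact absurd (hS.eq_nil_of_prod_eq_one h₁ h) (List.cons_ne_nil p t₁)
  rw [List.forall_mem_cons] at h₁ h₂
  simp only [List.prod_cons] at h hn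
  have hv := list_prod_mem_of_sIrreducible h₁.2
  have hw := list_prod_mem_of_sIrreducible h₂.2
  have ih₁ : ∀ l : List G, (∀ x ∈ l, SIrreducible S x) → t₁.prod = l.prod → t₁.length = l.length :=
    fun l hl hl' => ih _ (hn ▸ hS.tau_lt_tau_mul_left h₁.1.1 hv h₁.1.2.1) h₁.2 hl hl' rfl
  have ih₂ : ∀ l : List G, (∀ x ∈ l, SIrreducible S x) → t₂.prod = l.prod → t₂.length = l.length :=
    fun l hl hl' => ih _ (hn ▸ h ▸ hS.tau_lt_tau_mul_left h₂.1.1 hw h₂.1.2.1) h₂.2 hl hl' rfl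
  by_cases hpr : p = r
  · subst hpr
    simp only [List.length_cons, ih₁ t₂ h₂.2 (mul_left_cancel h)]
  obtain ⟨x, y, c, hx, hy, hc, hvc, hwc⟩ :=
    hS.exists_sIrreducible_cofactors hhom h₁.1 h₂.1 hpr hv hw h
  obtain ⟨C, hC, rfl⟩ := hS.exists_list_prod_eq hc
  have e₁ := ih₁ (x :: C) (List.forall_mem_cons.2 ⟨hx, hC⟩) (by rw [hvc, List.prod_cons])
  have e₂ := ih₂ (y :: C) (List.forall_mem_cons.2 ⟨hy, hC⟩) (by rw [hwc, List.prod_cons])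
  simp only [List.length_cons] at e₁ e₂ ⊢
  omega

end IntegralMonoid

end

theorem index_well_defined_general {G : Type*} [Group G] (S : Submonoid G)
    (hS : IntegralMonoid S) (hhom : Homogeneous S)
    (u : G) (l₁ l₂ : List G)
    (h₁ : ∀ x ∈ l₁, x ∈ S ∧ tau S x = 2) (h₂ : ∀ x ∈ l₂, x ∈ S ∧ tau S x = 2)
    (hp₁ : l₁.prod = u) (hp₂ : l₂.prod = u) :
    l₁.length = l₂.length :=
  hS.length_eq_of_prod_eq hhom (fun x hx => hS.sIrreducible_iff.2 (h₁ x hx))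
    (fun x hx => hS.sIrreducible_iff.2 (h₂ x hx)) (hp₁.trans hp₂.symm)

theorem index_well_defined {G : Type*} [Group G] (S : Submonoid G)
    (hS : IntegralMonoid S) (hhom : Homogeneous S)
    (u : G) (hu : u ∈ S) (l₁ l₂ : List G)
    (h₁ : ∀ x ∈ l₁, x ∈ S ∧ tau S x = 2) (h₂ : ∀ x ∈ l₂, x ∈ S ∧ tau S x = 2)
    (hp₁ : l₁.prod = u) (hp₂ : l₂.prod = u) :
    l₁.length = l₂.length :=
  index_well_defined_general S hS hhom u l₁ l₂ h₁ h₂ hp₁ hp₂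
end

section
/- Multiplicativity of τ on pairwise coprime least common multiples: let k ≥ 2 and u : Fin k → S be such that for all i ≠ j the only common divisor of u i and u j in S is 1, and let m ∈ S satisfy ⋂ᵢ (u i)·S = m·S. Then τ(m) = ∏ᵢ τ(u i). In particular, if the u i are k pairwise distinct irreducible elements then τ(m) = 2^k. -/
open scoped BigOperators

section IMaux

variable {G : Type*} [Group G] {S : Submonoid G}

/-- coprimality: the only common divisor is 1 -/
def Cop (S : Submonoid G) (a b : G) : Prop :=
  ∀ d ∈ S, SDvd S d a → SDvd S d b → d = 1

lemma sdvd_def {a b : G} : SDvd S a b ↔ a⁻¹ * b ∈ S := by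
  constructor
  · rintro ⟨s, hs, rfl⟩; simpa using hs
  · intro h; exact ⟨a⁻¹ * b, h, by group⟩

lemma sdvd_refl (a : G) : SDvd S a a := sdvd_def.2 (by simpa using S.one_mem)

lemma sdvd_trans {a b c : G} (h1 : SDvd S a b) (h2 : SDvd S b c) : SDvd S a c := by
  rw [sdvd_def] at *
  have : (a⁻¹ * b) * (b⁻¹ * c) = a⁻¹ * c := by group
  rw [← this]; exact S.mul_mem h1 h2

lemma one_sdvd {a : G} : SDvd S 1 a ↔ a ∈ S := by rw [sdvd_def]; simp

lemma mem_of_sdvd {a b : G} (ha : a ∈ S) (h : SDvd S a b) : b ∈ S := by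
  rw [sdvd_def] at h
  have : a * (a⁻¹ * b) = b := by group
  rw [← this]; exact S.mul_mem ha h

lemma sdvd_mul {a t : G} (ht : t ∈ S) : SDvd S a (a * t) := by
  rw [sdvd_def]; simpa [mul_assoc] using ht

lemma sdvd_shift {g a b : G} (h : SDvd S a b) : SDvd S (g * a) (g * b) := by
  rw [sdvd_def] at *
  have : (g * a)⁻¹ * (g * b) = a⁻¹ * b := by group
  rw [this]; exact h

lemma sdvd_unshift {g a b : G} (h : SDvd S (g * a) (g * b)) : SDvd S a b := by
  rw [sdvd_def] at *
  have : (g * a)⁻¹ * (g * b) = a⁻¹ * b := by group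
  rwa [this] at h

lemma sdvd_antisymm (hS : IntegralMonoid S) {a b : G} (h1 : SDvd S a b) (h2 : SDvd S b a) :
    a = b := by
  rw [sdvd_def] at h1 h2
  have : (a⁻¹ * b)⁻¹ = b⁻¹ * a := by group
  have h3 := hS.ax1 _ h1 (by rw [this]; exact h2)
  have : a * (a⁻¹ * b) = b := by group
  rw [← this, h3, mul_one]

lemma sdvd_one_iff (hS : IntegralMonoid S) {d : G} (hd : d ∈ S) : SDvd S d 1 ↔ d = 1 := by
  constructor
  · intro h; exact (sdvd_antisymm hS (one_sdvd.2 hd) h).symm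
  · rintro rfl; exact sdvd_refl 1

/-- least common multiple predicate -/
def IsLcm (S : Submonoid G) (a b l : G) : Prop :=
  SDvd S a l ∧ SDvd S b l ∧ ∀ c, SDvd S a c → SDvd S b c → SDvd S l c

lemma isLcm_comm {a b l : G} (h : IsLcm S a b l) : IsLcm S b a l :=
  ⟨h.2.1, h.1, fun c h1 h2 => h.2.2 c h2 h1⟩

lemma isLcm_unique (hS : IntegralMonoid S) {a b l l' : G}
    (h : IsLcm S a b l) (h' : IsLcm S a b l') : l = l' :=
  sdvd_antisymm hS (h.2.2 l' h'.1 h'.2.1) (h'.2.2 l h.1 h.2.1)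

lemma exists_isLcm (hS : IntegralMonoid S) (a b : G) : ∃ l, IsLcm S a b l := by
  obtain ⟨x, hx, y, hy, hxy, huniv⟩ := hS.ax2 (a⁻¹ * b)
  refine ⟨a * x, sdvd_mul hx, ?_, ?_⟩
  · rw [sdvd_def]
    have : b⁻¹ * (a * x) = (a⁻¹ * b)⁻¹ * x := by group
    rw [this, hxy]
    have : (x * y⁻¹)⁻¹ * x = y := by group
    rw [this]; exact hy
  · intro c h1 h2
    rw [sdvd_def] at h1 h2
    have key : a⁻¹ * b = (a⁻¹ * c) * (b⁻¹ * c)⁻¹ := by group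
    obtain ⟨d, hd, hzd, hwd⟩ := huniv _ h1 _ h2 key
    rw [sdvd_def]
    have : (a * x)⁻¹ * c = x⁻¹ * (a⁻¹ * c) := by group
    rw [this, hzd]
    have : x⁻¹ * (x * d) = d := by group
    rw [this]; exact hd

lemma isLcm_shift {g a b l : G} (h : IsLcm S a b l) : IsLcm S (g * a) (g * b) (g * l) := by
  refine ⟨sdvd_shift h.1, sdvd_shift h.2.1, fun c h1 h2 => ?_⟩
  have hc : c = g * (g⁻¹ * c) := by group
  rw [hc] at h1 h2 ⊢
  exact sdvd_shift (h.2.2 _ (sdvd_unshift h1) (sdvd_unshift h2))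

open Classical in
noncomputable def lcmF (S : Submonoid G) (a b : G) : G :=
  if h : ∃ l, IsLcm S a b l then h.choose else 1

lemma lcmF_spec (hS : IntegralMonoid S) (a b : G) : IsLcm S a b (lcmF S a b) := by
  rw [lcmF]
  rw [dif_pos (exists_isLcm hS a b)]
  exact (exists_isLcm hS a b).choose_spec

/-- greatest common divisor predicate -/
def IsGcd (S : Submonoid G) (a b g : G) : Prop :=
  g ∈ S ∧ SDvd S g a ∧ SDvd S g b ∧ ∀ d ∈ S, SDvd S d a → SDvd S d b → SDvd S d g

/-- divisor set -/
def Dset (S : Submonoid G) (a : G) : Set G := {d | d ∈ S ∧ SDvd S d a}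

lemma dset_finite (hS : IntegralMonoid S) {a : G} (ha : a ∈ S) : (Dset S a).Finite := by
  have h : Dset S a ⊆ Prod.fst '' {p : G × G | p.1 ∈ S ∧ p.2 ∈ S ∧ p.1 * p.2 = a} := by
    rintro d ⟨hd, hda⟩
    rw [sdvd_def] at hda
    exact ⟨(d, d⁻¹ * a), ⟨hd, hda, by group⟩, rfl⟩
  exact ((hS.ax3 a ha).image _).subset h

lemma tau_eq_ncard (hS : IntegralMonoid S) {a : G} (ha : a ∈ S) :
    tau S a = (Dset S a).ncard := by
  have himg : {p : G × G | p.1 ∈ S ∧ p.2 ∈ S ∧ p.1 * p.2 = a} =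
      (fun d => (d, d⁻¹ * a)) '' Dset S a := by
    ext ⟨p₁, p₂⟩
    constructor
    · rintro ⟨h1, h2, h3⟩
      refine ⟨p₁, ⟨h1, sdvd_def.2 ?_⟩, ?_⟩
      · have : p₁⁻¹ * a = p₂ := by rw [← h3]; group
        rw [this]; exact h2
      · have : p₁⁻¹ * a = p₂ := by rw [← h3]; group
        simp [this]
    · rintro ⟨d, ⟨hd, hda⟩, heq⟩
      rw [sdvd_def] at hda
      obtain ⟨h1, h2⟩ := Prod.mk.injEq .. ▸ heq
      simp only [Prod.mk.injEq] at heq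
      obtain ⟨rfl, rfl⟩ := heq
      exact ⟨hd, hda, by group⟩
  rw [tau, himg, Set.ncard_image_of_injective _ (fun d d' h => (Prod.mk.injEq .. ▸ h).1)]

end IMaux
section IMaux2

variable {G : Type*} [Group G] {S : Submonoid G}

lemma exists_isGcd (hS : IntegralMonoid S) {a b : G} (ha : a ∈ S) (hb : b ∈ S) :
    ∃ g, IsGcd S a b g := by
  classical
  set C : Set G := {d | d ∈ S ∧ SDvd S d a ∧ SDvd S d b} with hC
  have hCfin : C.Finite := (dset_finite hS ha).subset (fun d hd => ⟨hd.1, hd.2.1⟩)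
  have hCclosed : ∀ x ∈ C, ∀ y ∈ C, lcmF S x y ∈ C := by
    rintro x ⟨hx, hxa, hxb⟩ y ⟨hy, hya, hyb⟩
    have hl := lcmF_spec hS x y
    exact ⟨mem_of_sdvd hx hl.1, hl.2.2 a hxa hya, hl.2.2 b hxb hyb⟩
  have key : ∀ F : Finset G, ↑F ⊆ C → ∃ g ∈ C, ∀ d ∈ F, SDvd S d g := by
    intro F
    induction F using Finset.induction_on with
    | empty =>
      intro _
      exact ⟨1, ⟨S.one_mem, one_sdvd.2 ha, one_sdvd.2 hb⟩, by simp⟩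
    | @insert x F' hx ih =>
      intro hsub
      have hxC : x ∈ C := hsub (by simp)
      obtain ⟨g, hgC, hg⟩ := ih (fun d hd => hsub (by simp [hd]))
      refine ⟨lcmF S x g, hCclosed x hxC g hgC, ?_⟩
      intro d hd
      rcases Finset.mem_insert.1 hd with heq | hd'
      · rw [heq]; exact (lcmF_spec hS x g).1
      · exact sdvd_trans (hg d hd') (lcmF_spec hS x g).2.1
  obtain ⟨g, hgC, hg⟩ := key hCfin.toFinset (by simp [Set.Finite.coe_toFinset])
  exact ⟨g, hgC.1, hgC.2.1, hgC.2.2, fun d hd hda hdb =>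
    hg d (hCfin.mem_toFinset.2 ⟨hd, hda, hdb⟩)⟩

lemma dset_mono {a b : G} (h : SDvd S a b) : Dset S a ⊆ Dset S b :=
  fun d hd => ⟨hd.1, sdvd_trans hd.2 h⟩

lemma ncard_dset_lt (hS : IntegralMonoid S) {a b : G} (ha : a ∈ S) (hb : b ∈ S)
    (h : SDvd S a b) (hne : a ≠ b) : (Dset S a).ncard < (Dset S b).ncard := by
  refine Set.ncard_lt_ncard ?_ (dset_finite hS hb)
  refine ⟨dset_mono h, fun hsub => ?_⟩
  have hbb : b ∈ Dset S a := hsub ⟨hb, sdvd_refl b⟩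
  exact hne (sdvd_antisymm hS h hbb.2)

/-- dividing out a non-unit strictly decreases the divisor count -/
lemma ncard_dset_lt_mul (hS : IntegralMonoid S) {p m : G} (hp : p ∈ S) (hm : m ∈ S)
    (hp1 : p ≠ 1) : (Dset S m).ncard < (Dset S (p * m)).ncard := by
  have hpm : p * m ∈ S := S.mul_mem hp hm
  have hsub : (fun t => p * t) '' Dset S m ⊆ Dset S (p * m) := by
    rintro _ ⟨t, ⟨ht, htm⟩, rfl⟩
    exact ⟨S.mul_mem hp ht, sdvd_shift htm⟩
  have h1 : (1 : G) ∈ Dset S (p * m) := ⟨S.one_mem, one_sdvd.2 hpm⟩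
  have h1n : (1 : G) ∉ (fun t => p * t) '' Dset S m := by
    rintro ⟨t, ⟨ht, _⟩, hteq⟩
    simp only at hteq
    have htp : t = p⁻¹ := eq_inv_of_mul_eq_one_right hteq
    exact hp1 (hS.ax1 p hp (htp ▸ ht))
  have hss : (fun t => p * t) '' Dset S m ⊂ Dset S (p * m) :=
    ⟨hsub, fun hc => h1n (hc h1)⟩
  calc (Dset S m).ncard = ((fun t => p * t) '' Dset S m).ncard :=
        (Set.ncard_image_of_injective _ (mul_right_injective p)).symm
    _ < (Dset S (p * m)).ncard := Set.ncard_lt_ncard hss (dset_finite hS hpm)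

lemma leftSet_eq {a x : G} : x ∈ leftSet S a ↔ SDvd S a x := Iff.rfl

lemma leftSet_inter {a b l : G} (h : IsLcm S a b l) :
    leftSet S a ∩ leftSet S b = leftSet S l := by
  ext x
  constructor
  · rintro ⟨h1, h2⟩; exact h.2.2 x h1 h2
  · intro hx; exact ⟨sdvd_trans h.1 hx, sdvd_trans h.2.1 hx⟩

lemma cop_symm {a b : G} (h : Cop S a b) : Cop S b a := fun d hd h1 h2 => h d hd h2 h1

lemma cop_of_sdvd {a a' b : G} (h : Cop S a b) (ha : SDvd S a' a) : Cop S a' b :=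
  fun d hd h1 h2 => h d hd (sdvd_trans h1 ha) h2

lemma cop_of_sdvd_right {a b b' : G} (h : Cop S a b) (hb : SDvd S b' b) : Cop S a b' :=
  fun d hd h1 h2 => h d hd h1 (sdvd_trans h2 hb)

/-- homogeneity reformulated with lcms -/
lemma hom' (hhom : Homogeneous S) {w u v l : G} (hw : w ∈ S) (hu : u ∈ S) (hv : v ∈ S)
    (c1 : Cop S w u) (c2 : Cop S w v) (h1 : IsLcm S w u l) (h2 : IsLcm S w v l) : u = v :=
  hhom w u v hw hu hv c1 c2 (by rw [leftSet_inter h1, leftSet_inter h2])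

/-- Key lemma (K): if x·t is a multiple of x dividing lcm(x,v) and coprime to v, then t = 1. -/
lemma lemK (hS : IntegralMonoid S) (hhom : Homogeneous S) {x v t l : G}
    (hx : x ∈ S) (hv : v ∈ S) (ht : t ∈ S)
    (c1 : Cop S x v) (c2 : Cop S (x * t) v) (hl : IsLcm S x v l)
    (hdvd : SDvd S (x * t) l) : t = 1 := by
  have hxt : x * t ∈ S := S.mul_mem hx ht
  have h1 : IsLcm S v x l := isLcm_comm hl
  have h2 : IsLcm S v (x * t) l := by
    refine ⟨hl.2.1, hdvd, fun c hvc hxtc => ?_⟩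
    exact hl.2.2 c (sdvd_trans (sdvd_mul ht) hxtc) hvc
  have := hom' hhom hv hx hxt (cop_symm c1) (cop_symm c2) h1 h2
  have : x * 1 = x * t := by rw [mul_one]; exact this
  exact (mul_left_cancel this).symm

end IMaux2
section IMaux3

variable {G : Type*} [Group G] {S : Submonoid G}

/-- Lemma (†): an element dividing lcm(u,v) and coprime to both coprime factors is 1. -/
lemma lemDagger (hS : IntegralMonoid S) (hhom : Homogeneous S) :
    ∀ n : ℕ, ∀ u v a l : G, u ∈ S → v ∈ S → a ∈ S →
    Cop S u v → IsLcm S u v l → SDvd S a l → Cop S a u → Cop S a v →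
    (Dset S u).ncard + (Dset S v).ncard + (Dset S a).ncard ≤ n → a = 1 := by
  intro n
  induction n using Nat.strong_induction_on with
  | _ n IH =>
  intro u v a l hu hv ha hcuv hl hal hau hav hmeas
  obtain ⟨y, hy⟩ := exists_isLcm hS a u
  have hyS : y ∈ S := mem_of_sdvd ha hy.1
  obtain ⟨g, hg⟩ := exists_isGcd hS hyS hv
  have hyl : SDvd S y l := hy.2.2 l hal hl.1
  by_cases hgv : g = v
  · -- v divides y = lcm(a,u); conclude a = v by homogeneity, then a = 1
    have hvy : SDvd S v y := hgv ▸ hg.2.1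
    have h2 : IsLcm S u v y :=
      ⟨hy.2.1, hvy, fun c huc hvc => sdvd_trans hyl (hl.2.2 c huc hvc)⟩
    have h1 : IsLcm S u a y := isLcm_comm hy
    have hav' := hom' hhom hu ha hv (cop_symm hau) hcuv h1 h2
    exact hav a ha (sdvd_refl a) (hav' ▸ sdvd_refl a)
  · -- recurse: g := gcd(lcm(a,u), v) is coprime to a and u, divides lcm(a,u)
    have hga : Cop S g a := fun d hd h1 h2 => hav d hd h2 (sdvd_trans h1 hg.2.2.1)
    have hgu : Cop S g u := fun d hd h1 h2 => hcuv d hd h2 (sdvd_trans h1 hg.2.2.1)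
    have hglt : (Dset S g).ncard < (Dset S v).ncard :=
      ncard_dset_lt hS hg.1 hv hg.2.2.1 hgv
    have hm' : (Dset S a).ncard + (Dset S u).ncard + (Dset S g).ncard < n := by omega
    have hg1 : g = 1 :=
      IH _ hm' a u g y ha hu hg.1 hau hy hg.2.1 hga hgu le_rfl
    have hcvy : Cop S v y := by
      intro d hd h1 h2
      have := hg.2.2.2 d hd h2 h1
      rw [hg1] at this
      exact (sdvd_one_iff hS hd).1 this
    have h1 : IsLcm S v u l := isLcm_comm hl
    have h2 : IsLcm S v y l :=
      ⟨hl.2.1, hyl, fun c hvc hyc => hl.2.2 c (sdvd_trans hy.2.1 hyc) hvc⟩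
    have huy : u = y := hom' hhom hv hu hyS (cop_symm hcuv) hcvy h1 h2
    exact hau a ha (sdvd_refl a) (by rw [huy]; exact hy.1)

/-- Lemma (M): if p ≤ a ≤ lcm(p,v) with p coprime to v, then a = lcm(p, gcd(a,v)). -/
lemma lemM (hS : IntegralMonoid S) (hhom : Homogeneous S) {p v a q r L : G}
    (hp : p ∈ S) (hv : v ∈ S) (ha : a ∈ S)
    (hpv : Cop S p v) (hpa : SDvd S p a) (hL : IsLcm S p v L) (haL : SDvd S a L)
    (hq : IsGcd S a v q) (hr : IsLcm S p q r) : a = r := by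
  have hqS : q ∈ S := hq.1
  -- coprimality of p and q
  have hcpq : Cop S p q := fun d hd h1 h2 => hpv d hd h1 (sdvd_trans h2 hq.2.2.1)
  -- r divides a
  have hra : SDvd S r a := hr.2.2 a hpa hq.2.1
  -- IsLcm r v L
  have hrL : SDvd S r L := hr.2.2 L hL.1 (sdvd_trans hq.2.2.1 hL.2.1)
  have hrvL : IsLcm S r v L :=
    ⟨hrL, hL.2.1, fun c hrc hvc => hL.2.2 c (sdvd_trans hr.1 hrc) hvc⟩
  -- quotient by q
  have hqr : SDvd S q r := hr.2.1
  have hqa : SDvd S q a := hq.2.1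
  have hqv : SDvd S q v := hq.2.2.1
  rw [sdvd_def] at hqr hqa hqv
  have hqL : q⁻¹ * L ∈ S := by
    rw [← sdvd_def]; exact sdvd_trans (sdvd_def.2 hqv) hL.2.1
  have hshape : ∀ x : G, q * (q⁻¹ * x) = x := fun x => by group
  have hLq : IsLcm S (q⁻¹ * r) (q⁻¹ * v) (q⁻¹ * L) := by
    have := isLcm_shift (g := q⁻¹) hrvL
    simpa using this
  -- Cop (q⁻¹ r) (q⁻¹ v)
  have hc1 : Cop S (q⁻¹ * r) (q⁻¹ * v) := by
    intro t ht h1 h2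
    have hqt_r : SDvd S (q * t) r := by
      have := sdvd_shift (g := q) h1; rwa [hshape] at this
    have hqt_v : SDvd S (q * t) v := by
      have := sdvd_shift (g := q) h2; rwa [hshape] at this
    have hcqtp : Cop S (q * t) p := fun d hd hdqt hdp =>
      hpv d hd hdp (sdvd_trans hdqt hqt_v)
    exact lemK hS hhom hqS hp ht (cop_symm hcpq) hcqtp (isLcm_comm hr) hqt_r
  -- Cop (q⁻¹ a) (q⁻¹ v)
  have hc2 : Cop S (q⁻¹ * a) (q⁻¹ * v) := by
    intro t ht h1 h2
    have hqt_a : SDvd S (q * t) a := by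
      have := sdvd_shift (g := q) h1; rwa [hshape] at this
    have hqt_v : SDvd S (q * t) v := by
      have := sdvd_shift (g := q) h2; rwa [hshape] at this
    have hqtq : SDvd S (q * t) q := hq.2.2.2 (q * t) (S.mul_mem hqS ht) hqt_a hqt_v
    have : SDvd S t 1 := by
      have h' : SDvd S (q * t) (q * 1) := by rwa [mul_one]
      exact sdvd_unshift h'
    exact (sdvd_one_iff hS ht).1 this
  -- apply (K) with x = q⁻¹r, t = (q⁻¹r)⁻¹(q⁻¹a)
  have hpta : SDvd S (q⁻¹ * r) (q⁻¹ * a) := sdvd_shift hra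
  have htS : (q⁻¹ * r)⁻¹ * (q⁻¹ * a) ∈ S := sdvd_def.1 hpta
  have hprod : (q⁻¹ * r) * ((q⁻¹ * r)⁻¹ * (q⁻¹ * a)) = q⁻¹ * a := by group
  have haL' : SDvd S (q⁻¹ * a) (q⁻¹ * L) := sdvd_shift haL
  have ht1 : (q⁻¹ * r)⁻¹ * (q⁻¹ * a) = 1 := by
    refine lemK hS hhom hqr hqv htS hc1 ?_ hLq ?_
    · rw [hprod]; exact hc2
    · rw [hprod]; exact haL'
  have heq : q⁻¹ * a = q⁻¹ * r := by
    have h' := congrArg (fun z => (q⁻¹ * r) * z) ht1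
    simp only [mul_one] at h'
    rw [hprod] at h'
    exact h'
  have h2 := congrArg (fun z => q * z) heq
  simpa [hshape] using h2

end IMaux3
section IMaux4

variable {G : Type*} [Group G] {S : Submonoid G}

/-- the inductive step of lemma (L), for the case p = gcd(a,u) ≠ 1 -/
lemma lemStep (hS : IntegralMonoid S) (hhom : Homogeneous S) {N : ℕ}
    (IH : ∀ u v a l p q r : G, u ∈ S → v ∈ S → a ∈ S → Cop S u v → IsLcm S u v l →
        SDvd S a l → IsGcd S a u p → IsGcd S a v q → IsLcm S p q r →
        (Dset S l).ncard < N → a = r)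
    {u v a l p q r : G} (hu : u ∈ S) (hv : v ∈ S) (ha : a ∈ S)
    (hcuv : Cop S u v) (hl : IsLcm S u v l) (hal : SDvd S a l)
    (hgp : IsGcd S a u p) (hgq : IsGcd S a v q) (hr : IsLcm S p q r)
    (hmeas : (Dset S l).ncard ≤ N) (hp1 : p ≠ 1) : a = r := by
  have hpS : p ∈ S := hgp.1
  have hpa : SDvd S p a := hgp.2.1
  have hpu : SDvd S p u := hgp.2.2.1
  have hcpv : Cop S p v := fun d hd h1 h2 => hcuv d hd (sdvd_trans h1 hpu) h2
  obtain ⟨s, hs⟩ := exists_isLcm hS p v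
  have hsS : s ∈ S := mem_of_sdvd hpS hs.1
  have hpl : SDvd S p l := sdvd_trans hpu hl.1
  have hsl : SDvd S s l := hs.2.2 l hpl hl.2.1
  have husl : IsLcm S u s l :=
    ⟨hl.1, hsl, fun c huc hsc => hl.2.2 c huc (sdvd_trans hs.2.1 hsc)⟩
  have hshape : ∀ x : G, p * (p⁻¹ * x) = x := fun x => by group
  have hq' := isLcm_shift (g := p⁻¹) husl
  have huS' : p⁻¹ * u ∈ S := sdvd_def.1 hpu
  have hsS' : p⁻¹ * s ∈ S := sdvd_def.1 hs.1
  have hlS' : p⁻¹ * l ∈ S := sdvd_def.1 hpl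
  have haS' : p⁻¹ * a ∈ S := sdvd_def.1 hpa
  -- Cop (p⁻¹u) (p⁻¹s)
  have hcop' : Cop S (p⁻¹ * u) (p⁻¹ * s) := by
    intro t ht h1 h2
    have hpt_u : SDvd S (p * t) u := by
      have := sdvd_shift (g := p) h1; rwa [hshape] at this
    have hpt_s : SDvd S (p * t) s := by
      have := sdvd_shift (g := p) h2; rwa [hshape] at this
    have hcptv : Cop S (p * t) v := fun d hd hdpt hdv =>
      hcuv d hd (sdvd_trans hdpt hpt_u) hdv
    exact lemK hS hhom hpS hv ht hcpv hcptv hs hpt_s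
  have hal' : SDvd S (p⁻¹ * a) (p⁻¹ * l) := sdvd_shift hal
  -- IsGcd (p⁻¹a) (p⁻¹u) 1
  have hgp' : IsGcd S (p⁻¹ * a) (p⁻¹ * u) 1 := by
    refine ⟨S.one_mem, one_sdvd.2 haS', one_sdvd.2 huS', fun d hd h1 h2 => ?_⟩
    have hpd_a : SDvd S (p * d) a := by
      have := sdvd_shift (g := p) h1; rwa [hshape] at this
    have hpd_u : SDvd S (p * d) u := by
      have := sdvd_shift (g := p) h2; rwa [hshape] at this
    have hpd_p : SDvd S (p * d) p := hgp.2.2.2 (p * d) (S.mul_mem hpS hd) hpd_a hpd_u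
    have : SDvd S (p * d) (p * 1) := by rwa [mul_one]
    exact sdvd_unshift this
  obtain ⟨q', hgq'⟩ := exists_isGcd hS haS' hsS'
  have hr' : IsLcm S 1 q' q' := ⟨one_sdvd.2 hgq'.1, sdvd_refl q', fun c _ h => h⟩
  have hmeas' : (Dset S (p⁻¹ * l)).ncard < N := by
    have := ncard_dset_lt_mul hS hpS hlS' hp1
    rw [hshape] at this
    omega
  have ha' : p⁻¹ * a = q' :=
    IH (p⁻¹ * u) (p⁻¹ * s) (p⁻¹ * a) (p⁻¹ * l) 1 q' q' huS' hsS' haS'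
      hcop' hq' hal' hgp' hgq' hr' hmeas'
  -- hence a divides s = lcm(p,v)
  have has : SDvd S a s := by
    have h1 : SDvd S (p⁻¹ * a) (p⁻¹ * s) := ha' ▸ hgq'.2.2.1
    have := sdvd_shift (g := p) h1
    rwa [hshape, hshape] at this
  exact lemM hS hhom hpS hv ha hcpv hpa hs has hgq hr

/-- Lemma (L): every divisor of the lcm of a coprime pair is the lcm of its gcds
with the two factors. -/
lemma lemL (hS : IntegralMonoid S) (hhom : Homogeneous S)
    {u v a l p q r : G} (hu : u ∈ S) (hv : v ∈ S) (ha : a ∈ S)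
    (hcuv : Cop S u v) (hl : IsLcm S u v l) (hal : SDvd S a l)
    (hgp : IsGcd S a u p) (hgq : IsGcd S a v q) (hr : IsLcm S p q r) : a = r := by
  suffices H : ∀ N : ℕ, ∀ u v a l p q r : G, u ∈ S → v ∈ S → a ∈ S → Cop S u v →
      IsLcm S u v l → SDvd S a l → IsGcd S a u p → IsGcd S a v q → IsLcm S p q r →
      (Dset S l).ncard ≤ N → a = r by
    exact H _ u v a l p q r hu hv ha hcuv hl hal hgp hgq hr le_rfl
  intro N
  induction N using Nat.strong_induction_on with
  | _ N IH =>
  have IHfun : ∀ u v a l p q r : G, u ∈ S → v ∈ S → a ∈ S → Cop S u v → IsLcm S u v l →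
      SDvd S a l → IsGcd S a u p → IsGcd S a v q → IsLcm S p q r →
      (Dset S l).ncard < N → a = r := by
    intro u v a l p q r h1 h2 h3 h4 h5 h6 h7 h8 h9 hlt
    exact IH _ hlt u v a l p q r h1 h2 h3 h4 h5 h6 h7 h8 h9 le_rfl
  intro u v a l p q r hu hv ha hcuv hl hal hgp hgq hr hmeas
  by_cases hp1 : p = 1
  · by_cases hq1 : q = 1
    · -- both gcds trivial: a is coprime to u and v, hence a = 1 = r
      have hcau : Cop S a u := by
        intro d hd h1 h2
        have := hgp.2.2.2 d hd h1 h2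
        rw [hp1] at this
        exact (sdvd_one_iff hS hd).1 this
      have hcav : Cop S a v := by
        intro d hd h1 h2
        have := hgq.2.2.2 d hd h1 h2
        rw [hq1] at this
        exact (sdvd_one_iff hS hd).1 this
      have ha1 : a = 1 := lemDagger hS hhom
        ((Dset S u).ncard + (Dset S v).ncard + (Dset S a).ncard)
        u v a l hu hv ha hcuv hl hal hcau hcav le_rfl
      have hr1 : r = 1 := by
        have h1r : SDvd S 1 r := by rw [← hp1]; exact hr.1
        have hp1' : SDvd S p (1 : G) := by rw [hp1]; exact sdvd_refl 1
        have hq1' : SDvd S q (1 : G) := by rw [hq1]; exact sdvd_refl 1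
        have hr1' : SDvd S r (1 : G) := hr.2.2 1 hp1' hq1'
        exact sdvd_antisymm hS hr1' h1r
      rw [ha1, hr1]
    · exact lemStep hS hhom IHfun hv hu ha (cop_symm hcuv) (isLcm_comm hl) hal
        hgq hgp (isLcm_comm hr) hmeas hq1
  · exact lemStep hS hhom IHfun hu hv ha hcuv hl hal hgp hgq hr hmeas hp1

end IMaux4
section IMaux5

variable {G : Type*} [Group G] {S : Submonoid G}

lemma ncard_prod_set (s t : Set G) : (s ×ˢ t).ncard = s.ncard * t.ncard := by
  rw [← Nat.card_coe_set_eq, ← Nat.card_coe_set_eq, ← Nat.card_coe_set_eq]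
  rw [Nat.card_congr (Equiv.Set.prod s t), Nat.card_prod]

/-- binary multiplicativity of τ on a coprime lcm -/
lemma tau_mul (hS : IntegralMonoid S) (hhom : Homogeneous S) {u v m : G}
    (hu : u ∈ S) (hv : v ∈ S) (hc : Cop S u v) (hlcm : IsLcm S u v m) :
    tau S m = tau S u * tau S v := by
  have hmS : m ∈ S := mem_of_sdvd hu hlcm.1
  set f : G × G → G := fun x => lcmF S x.1 x.2 with hf
  have key : ∀ x y : G, x ∈ Dset S u → y ∈ Dset S v →
      IsLcm S v (lcmF S x y) (lcmF S v x) := by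
    intro x y hx hy
    have s1 := lcmF_spec hS x y
    have s2 := lcmF_spec hS v x
    exact ⟨s2.1, s1.2.2 _ s2.2.1 (sdvd_trans hy.2 s2.1),
      fun c hvc hρc => s2.2.2 c hvc (sdvd_trans s1.1 hρc)⟩
  have key' : ∀ x y : G, x ∈ Dset S u → y ∈ Dset S v →
      IsLcm S u (lcmF S x y) (lcmF S u y) := by
    intro x y hx hy
    have s1 := lcmF_spec hS x y
    have s2 := lcmF_spec hS u y
    exact ⟨s2.1, s1.2.2 _ (sdvd_trans hx.2 s2.1) s2.2.1,
      fun c hvc hρc => s2.2.2 c hvc (sdvd_trans s1.2.1 hρc)⟩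
  have hbij : Set.BijOn f ((Dset S u) ×ˢ (Dset S v)) (Dset S m) := by
    refine ⟨?_, ?_, ?_⟩
    · rintro ⟨x, y⟩ ⟨hx, hy⟩
      have spec := lcmF_spec hS x y
      exact ⟨mem_of_sdvd hx.1 spec.1,
        spec.2.2 m (sdvd_trans hx.2 hlcm.1) (sdvd_trans hy.2 hlcm.2.1)⟩
    · rintro ⟨x, y⟩ ⟨hx, hy⟩ ⟨x', y'⟩ ⟨hx', hy'⟩ heq
      simp only [hf] at heq
      have ht1 : IsLcm S v (lcmF S x y) (lcmF S v x) := key x y hx hy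
      have ht2 : IsLcm S v (lcmF S x y) (lcmF S v x') := by
        rw [heq]; exact key x' y' hx' hy'
      have htt : lcmF S v x = lcmF S v x' := isLcm_unique hS ht1 ht2
      have hcvx : Cop S v x := fun d hd h1 h2 =>
        (cop_symm hc) d hd h1 (sdvd_trans h2 hx.2)
      have hcvx' : Cop S v x' := fun d hd h1 h2 =>
        (cop_symm hc) d hd h1 (sdvd_trans h2 hx'.2)
      have hxx : x = x' := hom' hhom hv hx.1 hx'.1 hcvx hcvx'
        (lcmF_spec hS v x) (htt ▸ lcmF_spec hS v x')
      have hs1 : IsLcm S u (lcmF S x y) (lcmF S u y) := key' x y hx hy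
      have hs2 : IsLcm S u (lcmF S x y) (lcmF S u y') := by
        rw [heq]; exact key' x' y' hx' hy'
      have hss : lcmF S u y = lcmF S u y' := isLcm_unique hS hs1 hs2
      have hcuy : Cop S u y := fun d hd h1 h2 => hc d hd h1 (sdvd_trans h2 hy.2)
      have hcuy' : Cop S u y' := fun d hd h1 h2 => hc d hd h1 (sdvd_trans h2 hy'.2)
      have hyy : y = y' := hom' hhom hu hy.1 hy'.1 hcuy hcuy'
        (lcmF_spec hS u y) (hss ▸ lcmF_spec hS u y')
      exact Prod.ext hxx hyy
    · rintro a ⟨haS, ham⟩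
      obtain ⟨p, hp⟩ := exists_isGcd hS haS hu
      obtain ⟨q, hq⟩ := exists_isGcd hS haS hv
      have har : a = lcmF S p q :=
        lemL hS hhom hu hv haS hc hlcm ham hp hq (lcmF_spec hS p q)
      exact ⟨(p, q), ⟨⟨hp.1, hp.2.2.1⟩, ⟨hq.1, hq.2.2.1⟩⟩, har.symm⟩
  rw [tau_eq_ncard hS hmS, tau_eq_ncard hS hu, tau_eq_ncard hS hv]
  rw [← hbij.image_eq, Set.ncard_image_of_injOn hbij.injOn]
  exact ncard_prod_set _ _

end IMaux5
section IMaux6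

variable {G : Type*} [Group G] {S : Submonoid G}

/-- lcm of a finite family -/
def IsLcmFam (S : Submonoid G) {n : ℕ} (w : Fin n → G) (l : G) : Prop :=
  (∀ i, SDvd S (w i) l) ∧ ∀ c, (∀ i, SDvd S (w i) c) → SDvd S l c

lemma exists_isLcmFam (hS : IntegralMonoid S) :
    ∀ n : ℕ, ∀ w : Fin (n + 1) → G, ∃ l, IsLcmFam S w l := by
  intro n
  induction n with
  | zero =>
    intro w
    refine ⟨w 0, fun i => ?_, fun c hc => hc 0⟩
    rw [Fin.eq_zero i]; exact sdvd_refl _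
  | succ n IH =>
    intro w
    obtain ⟨l'', h''⟩ := IH (w ∘ Fin.succ)
    refine ⟨lcmF S (w 0) l'', fun i => ?_, fun c hc => ?_⟩
    · have spec := lcmF_spec hS (w 0) l''
      refine Fin.cases spec.1 (fun j => sdvd_trans (h''.1 j) spec.2.1) i
    · exact (lcmF_spec hS (w 0) l'').2.2 c (hc 0)
        (h''.2 c (fun j => hc j.succ))

lemma isLcm_head {n : ℕ} {w : Fin (n + 2) → G} {l l'' : G}
    (h'' : IsLcmFam S (w ∘ Fin.succ) l'') (hfam : IsLcmFam S w l) :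
    IsLcm S (w 0) l'' l := by
  refine ⟨hfam.1 0, h''.2 l (fun j => hfam.1 j.succ), fun c h0 hc => ?_⟩
  refine hfam.2 c ?_
  exact fun i => Fin.cases h0 (fun j => sdvd_trans (h''.1 j) hc) i

lemma famCop (hS : IntegralMonoid S) (hhom : Homogeneous S) :
    ∀ n : ℕ, ∀ w : Fin (n + 1) → G, (∀ i, w i ∈ S) →
    (∀ i j, i ≠ j → Cop S (w i) (w j)) → ∀ x ∈ S, (∀ i, Cop S x (w i)) →
    ∀ l, IsLcmFam S w l → Cop S x l := by
  intro n
  induction n with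
  | zero =>
    intro w hw hpair x hx hcx l hl
    have hlw : SDvd S l (w 0) := hl.2 (w 0) (fun i => by rw [Fin.eq_zero i]; exact sdvd_refl _)
    exact fun d hd h1 h2 => hcx 0 d hd h1 (sdvd_trans h2 hlw)
  | succ n IH =>
    intro w hw hpair x hx hcx l hl
    obtain ⟨l'', h''⟩ := exists_isLcmFam hS n (w ∘ Fin.succ)
    have hl''S : l'' ∈ S := mem_of_sdvd (hw 1) (h''.1 0)
    have hL : IsLcm S (w 0) l'' l := isLcm_head h'' hl
    have hpairt : ∀ i j, i ≠ j → Cop S ((w ∘ Fin.succ) i) ((w ∘ Fin.succ) j) :=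
      fun i j hij => hpair _ _ (fun h => hij (Fin.succ_injective _ h))
    have hcop0 : Cop S (w 0) l'' := IH (w ∘ Fin.succ) (fun j => hw j.succ) hpairt
      (w 0) (hw 0) (fun j => hpair 0 j.succ (Ne.symm (Fin.succ_ne_zero j))) l'' h''
    intro e he h1 h2
    have hce0 : Cop S e (w 0) := fun d hd hd1 hd2 => hcx 0 d hd (sdvd_trans hd1 h1) hd2
    have hcet : ∀ j : Fin (n + 1), Cop S e ((w ∘ Fin.succ) j) :=
      fun j d hd hd1 hd2 => hcx j.succ d hd (sdvd_trans hd1 h1) hd2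
    have hcel : Cop S e l'' := IH (w ∘ Fin.succ) (fun j => hw j.succ) hpairt e he hcet l'' h''
    exact lemDagger hS hhom
      ((Dset S (w 0)).ncard + (Dset S l'').ncard + (Dset S e).ncard)
      (w 0) l'' e l (hw 0) hl''S he hcop0 hL h2 hce0 hcel le_rfl

lemma famTau (hS : IntegralMonoid S) (hhom : Homogeneous S) :
    ∀ n : ℕ, ∀ w : Fin (n + 1) → G, (∀ i, w i ∈ S) →
    (∀ i j, i ≠ j → Cop S (w i) (w j)) → ∀ l ∈ S, IsLcmFam S w l →
    tau S l = ∏ i, tau S (w i) := by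
  intro n
  induction n with
  | zero =>
    intro w hw hpair l hlS hl
    have hlw : SDvd S l (w 0) := hl.2 (w 0) (fun i => by rw [Fin.eq_zero i]; exact sdvd_refl _)
    have : l = w 0 := sdvd_antisymm hS hlw (hl.1 0)
    rw [this, Fin.prod_univ_one]
  | succ n IH =>
    intro w hw hpair l hlS hl
    obtain ⟨l'', h''⟩ := exists_isLcmFam hS n (w ∘ Fin.succ)
    have hl''S : l'' ∈ S := mem_of_sdvd (hw 1) (h''.1 0)
    have hL : IsLcm S (w 0) l'' l := isLcm_head h'' hl
    have hpairt : ∀ i j, i ≠ j → Cop S ((w ∘ Fin.succ) i) ((w ∘ Fin.succ) j) :=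
      fun i j hij => hpair _ _ (fun h => hij (Fin.succ_injective _ h))
    have hcop0 : Cop S (w 0) l'' := famCop hS hhom n (w ∘ Fin.succ) (fun j => hw j.succ)
      hpairt (w 0) (hw 0) (fun j => hpair 0 j.succ (Ne.symm (Fin.succ_ne_zero j))) l'' h''
    have h1 : tau S l = tau S (w 0) * tau S l'' := tau_mul hS hhom (hw 0) hl''S hcop0 hL
    have h2 : tau S l'' = ∏ j, tau S ((w ∘ Fin.succ) j) :=
      IH (w ∘ Fin.succ) (fun j => hw j.succ) hpairt l'' hl''S h''
    rw [h1, h2]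
    exact (Fin.prod_univ_succ fun i => tau S (w i)).symm

end IMaux6

theorem tau_lcm_pairwise_coprime {G : Type*} [Group G] (S : Submonoid G)
    (hS : IntegralMonoid S) (hhom : Homogeneous S)
    (k : ℕ) (hk : 2 ≤ k) (u : Fin k → G) (hu : ∀ i, u i ∈ S)
    (hcop : ∀ i j, i ≠ j → ∀ e ∈ S, SDvd S e (u i) → SDvd S e (u j) → e = 1)
    (m : G) (hm : m ∈ S) (hlcm : (⋂ i, leftSet S (u i)) = leftSet S m) :
    tau S m = ∏ i, tau S (u i) ∧
      (Function.Injective u → (∀ i, tau S (u i) = 2) → tau S m = 2 ^ k) := by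
  obtain ⟨n, rfl⟩ : ∃ n, k = n + 1 := ⟨k - 1, by omega⟩
  have hfam : IsLcmFam S u m := by
    constructor
    · intro i
      have hmm : m ∈ leftSet S m := ⟨1, S.one_mem, (mul_one m).symm⟩
      rw [← hlcm] at hmm
      exact Set.mem_iInter.1 hmm i
    · intro c hc
      have : c ∈ ⋂ i, leftSet S (u i) := Set.mem_iInter.2 (fun i => hc i)
      rw [hlcm] at this
      exact this
  have hfirst : tau S m = ∏ i, tau S (u i) :=
    famTau hS hhom n u hu (fun i j hij => hcop i j hij) m hm hfam
  refine ⟨hfirst, fun _ h2 => ?_⟩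
  rw [hfirst]
  simp only [h2]
  rw [Finset.prod_const]
  simp
end
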